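/- Let K be an algebraic number field of degree l over ℚ and let B = ∏'_𝔭 N(𝔭)^(2l), the (finite) product being over all prime ideals 𝔭 of O_K that are ramified over ℚ (i.e., v_𝔭(p) ≥ 2 for the rational prime p below 𝔭). Let v ∈ O_K be a nonzero squarefull element, i.e., every prime ideal 𝔭 dividing vO_K satisfies v_𝔭(v) ≥ 2. Then ∏_{𝔭 | vO_K} N(𝔭)^(v_𝔭(p)) ≤ √(B·N(v)), where for each 𝔭 dividing vO_K, p is the rational prime with pℤ = 𝔭 ∩ ℤ, and N denotes the absolute norm (of an ideal) and N(v) = |N_{K/ℚ}(v)|. -/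

import Mathlib

open NumberField IsDedekindDomain
open scoped Classical nonZeroDivisors

/-- `v_𝔭(p)`: the ramification index of the prime ideal `𝔭 = v.asIdeal` over the rational
prime `p` lying below it (`pℤ = 𝔭 ∩ ℤ`). -/
noncomputable def ramIdxOverQ (K : Type*) [Field K] [NumberField K]
    (v : HeightOneSpectrum (𝓞 K)) : ℕ :=
  Ideal.ramificationIdx'
    (Ideal.comap (algebraMap ℤ (𝓞 K)) v.asIdeal) v.asIdeal

section AuxLemmas
set_option linter.unusedSectionVars false
variable (K : Type*) [Field K] [NumberField K]

lemma myComap_ne_bot (v : HeightOneSpectrum (𝓞 K)) :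
    Ideal.comap (algebraMap ℤ (𝓞 K)) v.asIdeal ≠ ⊥ := by
  obtain ⟨a, ha, ha0⟩ := Submodule.exists_mem_ne_zero_of_ne_bot v.ne_bot
  exact Ideal.comap_ne_bot_of_integral_mem ha0 ha (Algebra.IsIntegral.isIntegral a)

lemma myMap_ne_bot (v : HeightOneSpectrum (𝓞 K)) :
    Ideal.map (algebraMap ℤ (𝓞 K)) (Ideal.comap (algebraMap ℤ (𝓞 K)) v.asIdeal) ≠ ⊥ := by
  rw [Ne, Ideal.map_eq_bot_iff_of_injective (algebraMap ℤ (𝓞 K)).injective_int]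
  exact myComap_ne_bot K v

lemma ramIdx_pos (v : HeightOneSpectrum (𝓞 K)) : 1 ≤ ramIdxOverQ K v :=
  Nat.one_le_iff_ne_zero.mpr <|
    Ideal.IsDedekindDomain.ramificationIdx_ne_zero (myMap_ne_bot K v) v.isPrime
      Ideal.map_comap_le

lemma ramIdx_le (v : HeightOneSpectrum (𝓞 K)) : ramIdxOverQ K v ≤ Module.finrank ℚ K := by
  classical
  set p := Ideal.comap (algebraMap ℤ (𝓞 K)) v.asIdeal with hp
  haveI : p.IsMaximal := Ideal.isMaximal_comap_of_isIntegral_of_isMaximal v.asIdeal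
  have hsum := Ideal.sum_ramification_inertia (R := ℤ) (𝓞 K) ℚ K (myComap_ne_bot K v)
  have hv : v.asIdeal ∈ (UniqueFactorizationMonoid.factors
      (Ideal.map (algebraMap ℤ (𝓞 K)) p)).toFinset := by
    rw [Multiset.mem_toFinset, UniqueFactorizationMonoid.factors_eq_normalizedFactors,
      Ideal.mem_normalizedFactors_iff (myMap_ne_bot K v)]
    exact ⟨v.isPrime, Ideal.map_comap_le⟩
  haveI : v.asIdeal.LiesOver p := ⟨rfl⟩
  have hef : ramIdxOverQ K v * Ideal.inertiaDeg' p v.asIdeal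
      ≤ Module.finrank ℚ K := by
    rw [← hsum]
    exact Finset.single_le_sum (f := fun P => Ideal.ramificationIdx' p P *
      Ideal.inertiaDeg' p P) (fun i _ => Nat.zero_le _) hv
  calc ramIdxOverQ K v ≤ ramIdxOverQ K v * Ideal.inertiaDeg' p v.asIdeal :=
        Nat.le_mul_of_pos_right _ (Ideal.inertiaDeg'_pos p v.asIdeal)
  _ ≤ _ := hef

lemma myDifferent_ne_bot : differentIdeal ℤ (𝓞 K) ≠ ⊥ := by
  intro h
  have h2 := coeIdeal_differentIdeal ℤ ℚ K (𝓞 K)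
  rw [h] at h2
  have hd : FractionalIdeal.dual ℤ ℚ (1 : FractionalIdeal (𝓞 K)⁰ K) ≠ 0 :=
    FractionalIdeal.dual_ne_zero ℤ ℚ one_ne_zero
  have := mul_inv_cancel₀ hd
  rw [← h2] at this
  simp at this

lemma ramified_finite : {v : HeightOneSpectrum (𝓞 K) | 2 ≤ ramIdxOverQ K v}.Finite := by
  refine Set.Finite.subset (Ideal.finite_factors (I := differentIdeal ℤ (𝓞 K))
    (myDifferent_ne_bot K)) ?_
  intro v hv
  simp only [Set.mem_setOf_eq] at hv ⊢
  haveI : (Ideal.comap (algebraMap ℤ (𝓞 K)) v.asIdeal).IsMaximal :=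
    Ideal.isMaximal_comap_of_isIntegral_of_isMaximal v.asIdeal
  have hdvd := pow_sub_one_dvd_differentIdeal (A := ℤ) (B := 𝓞 K) v.asIdeal (ramIdxOverQ K v)
    (myComap_ne_bot K v) (Ideal.dvd_iff_le.mpr Ideal.le_pow_ramificationIdx')
  exact dvd_trans (dvd_pow_self v.asIdeal (by omega)) hdvd

end AuxLemmas

/-- Let `K` be a number field of degree `l`, let `B = ∏'_𝔭 N(𝔭)^(2l)` be the (finite)
product over the prime ideals of `𝓞 K` ramified over `ℚ` (those with `v_𝔭(p) ≥ 2`), and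
let `x` be a nonzero squarefull element of `𝓞 K` (every prime ideal dividing `x𝓞_K` does
so at least twice). Then `∏_{𝔭 ∣ x𝓞_K} N(𝔭)^(v_𝔭(p)) ≤ √(B · N(x))`. -/

theorem prod_norm_pow_ramIdx_le_sqrt_of_squarefull
    (K : Type*) [Field K] [NumberField K]
    (x : 𝓞 K) (hx : x ≠ 0)
    (hsf : ∀ v : HeightOneSpectrum (𝓞 K),
      v.asIdeal ∣ Ideal.span {x} → v.asIdeal ^ 2 ∣ Ideal.span {x}) :
    (∏ᶠ v : HeightOneSpectrum (𝓞 K),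
        if v.asIdeal ∣ Ideal.span {x} then
          (Ideal.absNorm v.asIdeal : ℝ) ^ ramIdxOverQ K v else 1)
      ≤ Real.sqrt
        ((∏ᶠ v : HeightOneSpectrum (𝓞 K),
            if 2 ≤ ramIdxOverQ K v then
              (Ideal.absNorm v.asIdeal : ℝ) ^ (2 * Module.finrank ℚ K) else 1) *
          (Algebra.norm ℤ x).natAbs) := by

  classical
  set l := Module.finrank ℚ K with hl
  have hI0 : (Ideal.span {x} : Ideal (𝓞 K)) ≠ 0 := by
    simpa [Ideal.span_singleton_eq_bot] using hx
  have hTfin := Ideal.finite_factors hI0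
  have hRfin := ramified_finite K
  set T := hTfin.toFinset with hT
  set R := hRfin.toFinset with hR
  have hmemT : ∀ v, v ∈ T ↔ v.asIdeal ∣ Ideal.span {x} := fun v => hTfin.mem_toFinset
  have hmemR : ∀ v, v ∈ R ↔ 2 ≤ ramIdxOverQ K v := fun v => hRfin.mem_toFinset
  have hNpos : ∀ v : HeightOneSpectrum (𝓞 K), 0 < Ideal.absNorm v.asIdeal := fun v =>
    Nat.pos_of_ne_zero fun h => v.ne_bot (Ideal.absNorm_eq_zero_iff.mp h)
  -- rewrite the finprods as finset products of naturals
  have hLHS : (∏ᶠ v : HeightOneSpectrum (𝓞 K),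
        if v.asIdeal ∣ Ideal.span {x} then
          (Ideal.absNorm v.asIdeal : ℝ) ^ ramIdxOverQ K v else 1)
      = ((∏ v ∈ T, Ideal.absNorm v.asIdeal ^ ramIdxOverQ K v : ℕ) : ℝ) := by
    rw [finprod_eq_prod_of_mulSupport_subset _ (s := T) ?_]
    · push_cast
      exact Finset.prod_congr rfl fun v hv => if_pos ((hmemT v).mp hv)
    · intro v hv
      rw [Function.mem_mulSupport] at hv
      rw [hT, Set.Finite.coe_toFinset]
      by_contra h
      exact hv (if_neg h)
  have hB : (∏ᶠ v : HeightOneSpectrum (𝓞 K),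
        if 2 ≤ ramIdxOverQ K v then
          (Ideal.absNorm v.asIdeal : ℝ) ^ (2 * l) else 1)
      = ((∏ v ∈ R, Ideal.absNorm v.asIdeal ^ (2 * l) : ℕ) : ℝ) := by
    rw [finprod_eq_prod_of_mulSupport_subset _ (s := R) ?_]
    · push_cast
      exact Finset.prod_congr rfl fun v hv => if_pos ((hmemR v).mp hv)
    · intro v hv
      rw [Function.mem_mulSupport] at hv
      rw [hR, Set.Finite.coe_toFinset]
      by_contra h
      exact hv (if_neg h)
  -- N(x) bound
  have hNx : (∏ v ∈ T, Ideal.absNorm v.asIdeal ^ 2) ≤ (Algebra.norm ℤ x).natAbs := by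
    rw [← Ideal.absNorm_span_singleton]
    have hdvd : (∏ v ∈ T, v.asIdeal ^ 2) ∣ Ideal.span {x} := by
      refine Finset.prod_dvd_of_coprime ?_ fun v hv => hsf v ((hmemT v).mp (by simpa using hv))
      intro a ha b hb hab
      have hne : a.asIdeal ≠ b.asIdeal := fun h => hab (HeightOneSpectrum.ext h)
      exact (Ideal.isCoprime_iff_sup_eq.mpr
        (a.isMaximal.coprime_of_ne b.isMaximal hne)).pow
    have hdvdN : (∏ v ∈ T, Ideal.absNorm v.asIdeal ^ 2) ∣
        Ideal.absNorm (Ideal.span {x} : Ideal (𝓞 K)) := by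
      have h1 : Ideal.absNorm (∏ v ∈ T, v.asIdeal ^ 2)
          = ∏ v ∈ T, Ideal.absNorm v.asIdeal ^ 2 := by
        rw [map_prod]
        exact Finset.prod_congr rfl fun v _ => map_pow _ _ _
      rw [← h1]
      exact map_dvd Ideal.absNorm hdvd
    refine Nat.le_of_dvd ?_ hdvdN
    exact Nat.pos_of_ne_zero fun h => hI0 (Ideal.absNorm_eq_zero_iff.mp h)
  -- the key combinatorial estimate
  have key : (∏ v ∈ T, Ideal.absNorm v.asIdeal ^ ramIdxOverQ K v)
      ≤ (∏ v ∈ T, Ideal.absNorm v.asIdeal) * ∏ v ∈ R, Ideal.absNorm v.asIdeal ^ l := by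
    have h1 : ∀ v ∈ T, Ideal.absNorm v.asIdeal ^ ramIdxOverQ K v
        = Ideal.absNorm v.asIdeal * Ideal.absNorm v.asIdeal ^ (ramIdxOverQ K v - 1) := by
      intro v _
      conv_lhs => rw [show ramIdxOverQ K v = 1 + (ramIdxOverQ K v - 1) by
        have := ramIdx_pos K v; omega]
      rw [pow_add, pow_one]
    rw [Finset.prod_congr rfl h1, Finset.prod_mul_distrib]
    refine Nat.mul_le_mul_left _ ?_
    have h2 : ∏ v ∈ T, Ideal.absNorm v.asIdeal ^ (ramIdxOverQ K v - 1)
        = ∏ v ∈ T ∩ R, Ideal.absNorm v.asIdeal ^ (ramIdxOverQ K v - 1) := by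
      symm
      refine Finset.prod_subset Finset.inter_subset_left ?_
      intro v hvT hvn
      have h2 : ¬ 2 ≤ ramIdxOverQ K v := fun h =>
        hvn (Finset.mem_inter.mpr ⟨hvT, (hmemR v).mpr h⟩)
      have : ramIdxOverQ K v - 1 = 0 := by omega
      rw [this, pow_zero]
    rw [h2]
    calc ∏ v ∈ T ∩ R, Ideal.absNorm v.asIdeal ^ (ramIdxOverQ K v - 1)
        ≤ ∏ v ∈ T ∩ R, Ideal.absNorm v.asIdeal ^ l := by
          refine Finset.prod_le_prod' fun v _ => Nat.pow_le_pow_right (hNpos v) ?_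
          have := ramIdx_le K v; omega
      _ ≤ ∏ v ∈ R, Ideal.absNorm v.asIdeal ^ l := by
          refine Finset.prod_le_prod_of_subset_of_one_le' Finset.inter_subset_right ?_
          exact fun v _ _ => Nat.one_le_iff_ne_zero.mpr (pow_ne_zero _ (hNpos v).ne')
  -- main natural-number inequality
  have main : (∏ v ∈ T, Ideal.absNorm v.asIdeal ^ ramIdxOverQ K v) ^ 2
      ≤ (∏ v ∈ R, Ideal.absNorm v.asIdeal ^ (2 * l)) * (Algebra.norm ℤ x).natAbs := by
    calc (∏ v ∈ T, Ideal.absNorm v.asIdeal ^ ramIdxOverQ K v) ^ 2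
        ≤ ((∏ v ∈ T, Ideal.absNorm v.asIdeal) * ∏ v ∈ R, Ideal.absNorm v.asIdeal ^ l) ^ 2 :=
          Nat.pow_le_pow_left key 2
      _ = (∏ v ∈ R, Ideal.absNorm v.asIdeal ^ (2 * l)) * ∏ v ∈ T, Ideal.absNorm v.asIdeal ^ 2 := by
          rw [mul_pow, ← Finset.prod_pow, ← Finset.prod_pow]
          rw [mul_comm]
          congr 1
          exact Finset.prod_congr rfl fun v _ => by rw [← pow_mul, mul_comm l 2]
      _ ≤ (∏ v ∈ R, Ideal.absNorm v.asIdeal ^ (2 * l)) * (Algebra.norm ℤ x).natAbs :=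
          Nat.mul_le_mul_left _ hNx
  rw [hLHS, hB]
  refine Real.le_sqrt_of_sq_le ?_
  calc ((∏ v ∈ T, Ideal.absNorm v.asIdeal ^ ramIdxOverQ K v : ℕ) : ℝ) ^ 2
      = (((∏ v ∈ T, Ideal.absNorm v.asIdeal ^ ramIdxOverQ K v) ^ 2 : ℕ) : ℝ) := by push_cast; ring
    _ ≤ (((∏ v ∈ R, Ideal.absNorm v.asIdeal ^ (2 * l)) * (Algebra.norm ℤ x).natAbs : ℕ) : ℝ) := by
        exact_mod_cast main
    _ = _ := by push_cast; ring
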